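/- Let m1, m2 divide n and define S = P(lcm(m1,m2)) − P(m1) − P(m2) + P(gcd(m1,m2)), where P(m) is the projector on ℂ^n onto span{|r(n/m)⟩ : 0 ≤ r < m}. Then S is an orthogonal projector of rank lcm(m1,m2) − m1 − m2 + gcd(m1,m2); moreover S = 0 if and only if m1 divides m2 or m2 divides m1. -/

import Mathlib

/-- For a divisor `m` of `n`, the orthogonal projector on `ℂ^n` onto the span of the
standard basis vectors whose index is a multiple of `n/m`. -/
noncomputable def proj (n m : ℕ) : Matrix (Fin n) (Fin n) ℂ :=
  Matrix.of fun i j => if i = j ∧ (n / m) ∣ (i : ℕ) then 1 else 0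

/-!
Every `P(m)` is the diagonal projector onto the coordinates in
`A m = {i | (n / m) ∣ i}`, a set with `m` elements. Since `n / gcd m1 m2 = lcm (n / m1) (n / m2)`,
`A (gcd m1 m2) = A m1 ∩ A m2`, and both `A m1`, `A m2` lie in `A (lcm m1 m2)`; by
inclusion–exclusion `S` is the diagonal projector onto `A (lcm m1 m2) \ (A m1 ∪ A m2)`, whose size
is `lcm − m1 − m2 + gcd`. This vanishes exactly when `{lcm, gcd} = {m1, m2}`, as both pairs have
the same sum and the same product.
-/

open Finset

theorem Finset.card_sdiff_union_add_card_add_card {α : Type*} [DecidableEq α] {s t u : Finset α}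
    (h : s ∪ t ⊆ u) : #(u \ (s ∪ t)) + #s + #t = #u + #(s ∩ t) := by
  have := card_union_add_card_inter s t
  have := card_le_card h
  rw [card_sdiff_of_subset h]
  omega

namespace Matrix

variable {ι R : Type*} [DecidableEq ι]

def coordProj [Zero R] [One R] (s : Finset ι) : Matrix ι ι R :=
  diagonal fun i => if i ∈ s then 1 else 0

theorem isHermitian_coordProj [Semiring R] [StarRing R] (s : Finset ι) :
    (coordProj s : Matrix ι ι R).IsHermitian := by
  refine isHermitian_diagonal_of_self_adjoint _ (funext fun i => ?_)
  split_ifs <;> simp [*]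

theorem coordProj_eq_zero_iff [MulZeroOneClass R] [Nontrivial R] {s : Finset ι} :
    (coordProj s : Matrix ι ι R) = 0 ↔ s = ∅ := by
  simp [coordProj, diagonal_eq_zero, funext_iff, eq_empty_iff_forall_notMem]

theorem coordProj_sub_sub_add_inter [Ring R] {s t u : Finset ι} (h : s ∪ t ⊆ u) :
    (coordProj u - coordProj s - coordProj t + coordProj (s ∩ t) : Matrix ι ι R) =
      coordProj (u \ (s ∪ t)) := by
  simp only [coordProj, diagonal_sub, diagonal_add]
  congr 1
  funext i
  have := @h i
  by_cases hs : i ∈ s <;> by_cases ht : i ∈ t <;> simp_all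

variable [Fintype ι]

theorem coordProj_mul_self [Semiring R] (s : Finset ι) :
    (coordProj s : Matrix ι ι R) * coordProj s = coordProj s := by
  rw [coordProj, diagonal_mul_diagonal]
  congr 1
  funext i
  split_ifs <;> simp

theorem rank_coordProj [Field R] (s : Finset ι) : (coordProj s : Matrix ι ι R).rank = #s := by
  classical
  simp [coordProj, rank_diagonal, Fintype.card_subtype]

end Matrix

namespace Fin

def multiples (n d : ℕ) : Finset (Fin n) := {i | d ∣ (i : ℕ)}

theorem card_multiples {n d : ℕ} (h : d ∣ n) : #(multiples n d) = n / d := by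
  have hrange : #(multiples n d) = #{k ∈ range n | d ∣ k} := by
    rw [multiples, ← card_map valEmbedding, ← Nat.Iio_eq_range, ← map_valEmbedding_univ,
      filter_map]
    rfl
  rcases d.eq_zero_or_pos with rfl | hd
  · simp_all
  rw [hrange, ← Nat.count_eq_card_filter_range]
  simpa [Nat.modEq_zero_iff_dvd, Nat.mod_eq_zero_of_dvd h] using Nat.count_modEq_card n hd 0

theorem multiples_inter_multiples (n a b : ℕ) :
    multiples n a ∩ multiples n b = multiples n (Nat.lcm a b) := by
  ext i
  simp [multiples, Nat.lcm_dvd_iff]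

theorem multiples_subset_multiples {n a b : ℕ} (h : a ∣ b) : multiples n b ⊆ multiples n a :=
  fun _ hi => by simp_all [multiples, h.trans]

theorem card_multiples_div {n m : ℕ} (hn : n ≠ 0) (hm : m ∣ n) : #(multiples n (n / m)) = m := by
  rw [card_multiples (Nat.div_dvd_of_dvd hm), Nat.div_div_self hm hn]

theorem multiples_div_inter_multiples_div {n a b : ℕ} (ha : a ∣ n) (hb : b ∣ n) :
    multiples n (n / a) ∩ multiples n (n / b) = multiples n (n / Nat.gcd a b) := by
  rw [multiples_inter_multiples, Nat.div_lcm_eq_div_gcd ha hb]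

theorem multiples_div_subset_multiples_div {n a b : ℕ} (hab : a ∣ b) (hb : b ∣ n) :
    multiples n (n / a) ⊆ multiples n (n / b) :=
  multiples_subset_multiples (Nat.div_dvd_div_left hb hab)

end Fin

theorem proj_eq_coordProj (n m : ℕ) : proj n m = Matrix.coordProj (Fin.multiples n (n / m)) := by
  ext i j
  by_cases h : i = j <;> simp [proj, Matrix.coordProj, Fin.multiples, h]

theorem Nat.lcm_add_gcd_eq_add_iff {a b : ℕ} : lcm a b + gcd a b = a + b ↔ a ∣ b ∨ b ∣ a := by
  constructor
  · intro h
    have hsum : (lcm a b : ℤ) + gcd a b = a + b := by exact_mod_cast h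
    have hprod : (gcd a b : ℤ) * lcm a b = a * b := by exact_mod_cast Nat.gcd_mul_lcm a b
    have : ((lcm a b : ℤ) - a) * (lcm a b - b) = 0 := by
      linear_combination (lcm a b : ℤ) * hsum - hprod
    rcases Int.mul_eq_zero.1 this with hla | hlb
    · right
      rw [← (by exact_mod_cast sub_eq_zero.1 hla : lcm a b = a)]
      exact dvd_lcm_right a b
    · left
      rw [← (by exact_mod_cast sub_eq_zero.1 hlb : lcm a b = b)]
      exact dvd_lcm_left a b
  · rintro (h | h)
    · rw [Nat.lcm_eq_right h, Nat.gcd_eq_left h, add_comm]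
    · rw [Nat.lcm_eq_left h, Nat.gcd_eq_right h, add_comm]

/-- For divisors `m1, m2` of `n`, the operator
`S = P(lcm m1 m2) − P(m1) − P(m2) + P(gcd m1 m2)` is an orthogonal projector of rank
`lcm m1 m2 − m1 − m2 + gcd m1 m2`; moreover `S = 0` iff `m1 ∣ m2` or `m2 ∣ m1`. -/
theorem proj_disjunction_minus_superposition (n m1 m2 : ℕ) (hn : 0 < n)
    (hm1 : m1 ∣ n) (hm2 : m2 ∣ n) :
    (proj n (Nat.lcm m1 m2) - proj n m1 - proj n m2 + proj n (Nat.gcd m1 m2)) *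
        (proj n (Nat.lcm m1 m2) - proj n m1 - proj n m2 + proj n (Nat.gcd m1 m2)) =
      proj n (Nat.lcm m1 m2) - proj n m1 - proj n m2 + proj n (Nat.gcd m1 m2) ∧
    (proj n (Nat.lcm m1 m2) - proj n m1 - proj n m2 + proj n (Nat.gcd m1 m2)).IsHermitian ∧
    (proj n (Nat.lcm m1 m2) - proj n m1 - proj n m2 + proj n (Nat.gcd m1 m2)).rank
        + m1 + m2 = Nat.lcm m1 m2 + Nat.gcd m1 m2 ∧
    ((proj n (Nat.lcm m1 m2) - proj n m1 - proj n m2 + proj n (Nat.gcd m1 m2)) = 0 ↔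
      m1 ∣ m2 ∨ m2 ∣ m1) := by
  have hL : Nat.lcm m1 m2 ∣ n := Nat.lcm_dvd hm1 hm2
  have hsub : Fin.multiples n (n / m1) ∪ Fin.multiples n (n / m2) ⊆
      Fin.multiples n (n / Nat.lcm m1 m2) :=
    union_subset (Fin.multiples_div_subset_multiples_div (Nat.dvd_lcm_left _ _) hL)
      (Fin.multiples_div_subset_multiples_div (Nat.dvd_lcm_right _ _) hL)
  have hS : proj n (Nat.lcm m1 m2) - proj n m1 - proj n m2 + proj n (Nat.gcd m1 m2) =
      Matrix.coordProj (Fin.multiples n (n / Nat.lcm m1 m2) \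
        (Fin.multiples n (n / m1) ∪ Fin.multiples n (n / m2))) := by
    simp only [proj_eq_coordProj, ← Fin.multiples_div_inter_multiples_div hm1 hm2]
    exact Matrix.coordProj_sub_sub_add_inter hsub
  have hrank : (proj n (Nat.lcm m1 m2) - proj n m1 - proj n m2 + proj n (Nat.gcd m1 m2)).rank
      + m1 + m2 = Nat.lcm m1 m2 + Nat.gcd m1 m2 := by
    have hcard := Finset.card_sdiff_union_add_card_add_card hsub
    rw [Fin.multiples_div_inter_multiples_div hm1 hm2, Fin.card_multiples_div hn.ne' hm1,
      Fin.card_multiples_div hn.ne' hm2, Fin.card_multiples_div hn.ne' hL,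
      Fin.card_multiples_div hn.ne' ((Nat.gcd_dvd_left m1 m2).trans hm1)] at hcard
    rwa [hS, Matrix.rank_coordProj]
  refine ⟨?_, ?_, hrank, ?_⟩
  · rw [hS, Matrix.coordProj_mul_self]
  · rw [hS]; exact Matrix.isHermitian_coordProj _
  rw [← Nat.lcm_add_gcd_eq_add_iff, ← hrank, hS, Matrix.coordProj_eq_zero_iff,
    Matrix.rank_coordProj, ← card_eq_zero]
  omega
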